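/- Let X be a measurable space, α ∈ (0,1], M ≥ 0, and let T ≥ 1 and r ∈ {1,…,T} be integers. Let B_r, …, B_{T−1} be Markov kernels on X, each α-minorized. For t = r, …, T let η_t and μ_t be probability measures on X and let G_t : X → [0, M] be measurable. Let f : X → ℝ be measurable with |f| ≤ 1 pointwise. Define R_r f := f and, for r ≤ t < T, R_{t+1} f (x) := ∫_X (R_t f)(z) B_t(x, dz). Then ∑_{t=r}^{T} ∫_X G_t(x)² · (R_t f(x) − ∫_X R_t f(x') dμ_t(x'))² dη_t(x) ≤ 4 M² / α, a bound which is uniform in the time horizon T. (This is the uniform-in-time part of the asymptotic variance bound for blocked forward smoothing corresponding to the backward-kernel compositions: each term is bounded by M²·4·(1−α)^{t−r}, and the geometric series sums to at most 4M²/α.) -/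

import Mathlib

/-!
Minorization is a Doeblin condition: writing `B_t(x, ·) = α B_t(x', ·) + ρ` with `ρ` of mass
`1 - α`, each `B_t` shrinks the oscillation of a bounded function by the factor `1 - α`.
Hence `R_t f` has oscillation at most `2 (1 - α)^(t - r)`, so does its deviation from any
`μ_t`-average, the `t`-th term is at most `4 M² (1 - α)^(t - r)`, and the geometric series
sums to at most `4 M² / α`.
-/

open MeasureTheory ProbabilityTheory

/-- `Rchain B r f n` is `R_{r+n} f`, defined by `R_r f = f` and
`R_{t+1} f (x) = ∫ (R_t f)(z) B_t(x, dz)`. -/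
noncomputable def Rchain {X : Type*} [MeasurableSpace X]
    (B : ℕ → Kernel X X) (r : ℕ) (f : X → ℝ) : ℕ → X → ℝ
  | 0 => f
  | n + 1 => fun x => ∫ z, Rchain B r f n z ∂(B (r + n) x)

section

variable {X : Type*} [MeasurableSpace X]

def ProbabilityTheory.Kernel.IsMinorized (κ : Kernel X X) (α : ℝ) : Prop :=
  ∀ x x' : X, ∀ A : Set X, MeasurableSet A → ENNReal.ofReal α * κ x' A ≤ κ x A

lemma ProbabilityTheory.Kernel.IsMinorized.smul_le {κ : Kernel X X} {α : ℝ}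
    (h : κ.IsMinorized α) (x x' : X) : ENNReal.ofReal α • κ x' ≤ κ x :=
  Measure.le_iff.2 fun A hA => h x x' A hA

lemma abs_sub_integral_le_of_abs_sub_le {μ : Measure X} [IsProbabilityMeasure μ]
    {g : X → ℝ} {c : ℝ} (hg : Integrable g μ) (hosc : ∀ u v, |g u - g v| ≤ c) (u : X) :
    |g u - ∫ v, g v ∂μ| ≤ c := by
  have h : g u - ∫ v, g v ∂μ = ∫ v, (g u - g v) ∂μ := by
    rw [integral_sub (integrable_const _) hg, integral_const, probReal_univ, one_smul]
  simpa [h] using norm_integral_le_of_norm_le_const (μ := μ) (f := fun v => g u - g v)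
    (.of_forall fun v => hosc u v)

lemma abs_integral_sub_integral_le_of_smul_le {μ ν : Measure X}
    [IsProbabilityMeasure μ] [IsProbabilityMeasure ν] {α c : ℝ} (hα0 : 0 ≤ α) (hα1 : α ≤ 1)
    (hle : ENNReal.ofReal α • ν ≤ μ) {g : X → ℝ} (hμg : Integrable g μ) (hνg : Integrable g ν)
    (hosc : ∀ u v, |g u - g v| ≤ c) :
    |∫ v, g v ∂μ - ∫ v, g v ∂ν| ≤ (1 - α) * c := by
  set m := ∫ v, g v ∂ν
  set ρ := μ - ENNReal.ofReal α • ν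
  have : IsFiniteMeasure (ENNReal.ofReal α • ν) := ν.smul_finite ENNReal.ofReal_ne_top
  have : IsFiniteMeasure ρ := isFiniteMeasure_of_le μ Measure.sub_le
  have hρ : ρ.real Set.univ = 1 - α := by
    rw [measureReal_def, Measure.sub_apply .univ hle, Measure.smul_apply, measure_univ,
      measure_univ, smul_eq_mul, mul_one, ENNReal.toReal_sub_of_le (by simpa using hα1) (by simp),
      ENNReal.toReal_ofReal hα0, ENNReal.toReal_one]
  -- the part `α • ν` of `μ` integrates `g - m` to zero
  have hdecomp : ∫ v, g v ∂μ - m = ∫ v, (g v - m) ∂ρ := by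
    have hμ : ∫ v, (g v - m) ∂μ = ∫ v, g v ∂μ - m := by
      simp [integral_sub hμg (integrable_const m)]
    have hν : ∫ v, (g v - m) ∂ν = 0 := by
      simp [m, integral_sub hνg (integrable_const m)]
    have hμint : Integrable (fun v => g v - m) μ := hμg.sub (integrable_const m)
    have hνint : Integrable (fun v => g v - m) ν := hνg.sub (integrable_const m)
    rw [← hμ, ← Measure.sub_add_cancel_of_le hle,
      integral_add_measure (hμint.mono_measure Measure.sub_le)
        (hνint.smul_measure ENNReal.ofReal_ne_top),
      integral_smul_measure, hν, smul_zero, add_zero]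
  rw [hdecomp, ← hρ, mul_comm]
  exact norm_integral_le_of_norm_le_const (f := fun v => g v - m)
    (.of_forall fun v => abs_sub_integral_le_of_abs_sub_le hνg hosc v)

section Rchain

variable {B : ℕ → Kernel X X} {r : ℕ} {f : X → ℝ}

lemma measurable_Rchain (hf : Measurable f) : ∀ n, Measurable (Rchain B r f n)
  | 0 => hf
  | n + 1 => ((measurable_Rchain hf n).stronglyMeasurable.integral_kernel).measurable

lemma abs_Rchain_le [∀ t, IsMarkovKernel (B t)] {C : ℝ} (hf : ∀ x, |f x| ≤ C) :
    ∀ n x, |Rchain B r f n x| ≤ C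
  | 0, x => hf x
  | n + 1, x => by
    simpa [Rchain] using norm_integral_le_of_norm_le_const (μ := B (r + n) x) (f := Rchain B r f n)
      (.of_forall fun z => abs_Rchain_le hf n z)

lemma integrable_Rchain [∀ t, IsMarkovKernel (B t)] {C : ℝ} (hf : Measurable f)
    (hfC : ∀ x, |f x| ≤ C) (ν : Measure X) [IsFiniteMeasure ν] (n : ℕ) :
    Integrable (Rchain B r f n) ν :=
  .of_bound (measurable_Rchain hf n).aestronglyMeasurable C
    (.of_forall fun x => abs_Rchain_le hfC n x)

lemma abs_Rchain_sub_le [∀ t, IsMarkovKernel (B t)] {α C c : ℝ} (hα0 : 0 ≤ α) (hα1 : α ≤ 1)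
    (hf : Measurable f) (hfC : ∀ x, |f x| ≤ C) (hosc : ∀ x y, |f x - f y| ≤ c) {n : ℕ}
    (hB : ∀ k < n, (B (r + k)).IsMinorized α) (x y : X) :
    |Rchain B r f n x - Rchain B r f n y| ≤ (1 - α) ^ n * c := by
  induction n generalizing x y with
  | zero => exact (one_mul c).symm ▸ hosc x y
  | succ n ih =>
    calc |Rchain B r f (n + 1) x - Rchain B r f (n + 1) y|
        ≤ (1 - α) * ((1 - α) ^ n * c) :=
          abs_integral_sub_integral_le_of_smul_le hα0 hα1 ((hB n n.lt_succ_self).smul_le x y)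
            (integrable_Rchain hf hfC _ n) (integrable_Rchain hf hfC _ n)
            (ih fun k hk => hB k (hk.trans n.lt_succ_self))
      _ = (1 - α) ^ (n + 1) * c := by ring

end Rchain

lemma integral_sq_mul_sq_sub_integral_le {η μ : Measure X} [IsProbabilityMeasure η]
    [IsProbabilityMeasure μ] {G h : X → ℝ} {M c : ℝ} (hG : ∀ x, |G x| ≤ M)
    (hh : Integrable h μ) (hosc : ∀ x y, |h x - h y| ≤ c) :
    ∫ x, G x ^ 2 * (h x - ∫ x', h x' ∂μ) ^ 2 ∂η ≤ M ^ 2 * c ^ 2 := by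
  have hpt : ∀ x, ‖G x ^ 2 * (h x - ∫ x', h x' ∂μ) ^ 2‖ ≤ M ^ 2 * c ^ 2 := fun x => by
    rw [Real.norm_eq_abs, abs_mul, abs_pow, abs_pow]
    gcongr
    · exact hG x
    · exact abs_sub_integral_le_of_abs_sub_le hh hosc x
  exact (le_abs_self _).trans
    (by simpa using norm_integral_le_of_norm_le_const (μ := η) (.of_forall hpt))

lemma sum_Icc_pow_sub_le {x : ℝ} (hx0 : 0 ≤ x) (hx1 : x < 1) (r T : ℕ) :
    ∑ t ∈ Finset.Icc r T, x ^ (t - r) ≤ 1 / (1 - x) := by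
  rw [← Finset.Ico_add_one_right_eq_Icc, Finset.sum_Ico_eq_sum_range]
  simp only [Nat.add_sub_cancel_left]
  rw [Finset.range_eq_Ico]
  simpa using geom_sum_Ico_le_of_lt_one (m := 0) (n := T + 1 - r) hx0 hx1

lemma integral_sq_mul_sq_Rchain_sub_le {B : ℕ → Kernel X X} [∀ t, IsMarkovKernel (B t)]
    {r n : ℕ} {α M : ℝ} (hα0 : 0 ≤ α) (hα1 : α ≤ 1) (hB : ∀ k < n, (B (r + k)).IsMinorized α)
    {η μ : Measure X} [IsProbabilityMeasure η] [IsProbabilityMeasure μ]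
    {G : X → ℝ} (hG0 : ∀ x, 0 ≤ G x) (hGM : ∀ x, G x ≤ M)
    {f : X → ℝ} (hf : Measurable f) (hf1 : ∀ x, |f x| ≤ 1) :
    ∫ x, G x ^ 2 * (Rchain B r f n x - ∫ x', Rchain B r f n x' ∂μ) ^ 2 ∂η
      ≤ 4 * M ^ 2 * (1 - α) ^ n := by
  have h1α : 0 ≤ 1 - α := by linarith
  have hpow : (1 - α) ^ n ≤ 1 := pow_le_one₀ h1α (by linarith)
  have hosc := abs_Rchain_sub_le (c := 2) hα0 hα1 hf hf1
    (fun x y => (abs_sub _ _).trans (by linarith [hf1 x, hf1 y])) hB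
  calc _ ≤ M ^ 2 * ((1 - α) ^ n * 2) ^ 2 :=
        integral_sq_mul_sq_sub_integral_le (fun x => (abs_of_nonneg (hG0 x)).trans_le (hGM x))
          (integrable_Rchain hf hf1 _ _) hosc
    _ ≤ 4 * M ^ 2 * (1 - α) ^ n := by
        nlinarith [mul_nonneg (mul_nonneg (sq_nonneg M) (pow_nonneg h1α n)) (sub_nonneg.2 hpow)]

end

theorem stmt_10_general {X : Type*} [MeasurableSpace X]
    (α : ℝ) (hα0 : 0 < α) (hα1 : α ≤ 1) (M : ℝ)
    (T r : ℕ)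
    (B : ℕ → Kernel X X) [∀ t, IsMarkovKernel (B t)]
    (hminor : ∀ t, r ≤ t → t ≤ T - 1 → ∀ x x' : X, ∀ A : Set X, MeasurableSet A →
      ENNReal.ofReal α * (B t) x' A ≤ (B t) x A)
    (η μ : ℕ → Measure X)
    (hη : ∀ t, IsProbabilityMeasure (η t)) (hμ : ∀ t, IsProbabilityMeasure (μ t))
    (G : ℕ → X → ℝ)
    (hG_nonneg : ∀ t x, 0 ≤ G t x) (hG_le : ∀ t x, G t x ≤ M)
    (f : X → ℝ) (hf_meas : Measurable f) (hf_le : ∀ x, |f x| ≤ 1) :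
    ∑ t ∈ Finset.Icc r T,
        ∫ x, (G t x) ^ 2
            * (Rchain B r f (t - r) x - ∫ x', Rchain B r f (t - r) x' ∂(μ t)) ^ 2 ∂(η t)
      ≤ 4 * M ^ 2 / α := by
  calc _ ≤ ∑ t ∈ Finset.Icc r T, 4 * M ^ 2 * (1 - α) ^ (t - r) := by
        refine Finset.sum_le_sum fun t ht => ?_
        obtain ⟨hrt, htT⟩ := Finset.mem_Icc.1 ht
        exact integral_sq_mul_sq_Rchain_sub_le hα0.le hα1
          (fun k hk => hminor (r + k) (by omega) (by omega)) (hG_nonneg t) (hG_le t) hf_meas hf_le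
    _ = 4 * M ^ 2 * ∑ t ∈ Finset.Icc r T, (1 - α) ^ (t - r) := (Finset.mul_sum ..).symm
    _ ≤ 4 * M ^ 2 * (1 / (1 - (1 - α))) := by
        gcongr
        exact sum_Icc_pow_sub_le (by linarith) (by linarith) r T
    _ = 4 * M ^ 2 / α := by rw [sub_sub_cancel, mul_one_div]

/-- With `α`-minorized Markov backward kernels `B_r, …, B_{T−1}`, potentials
`G_t` bounded by `M`, probability measures `η_t, μ_t`, `|f| ≤ 1`, and
`R_r f = f`, `R_{t+1} f (x) = ∫ R_t f dB_t(x,·)`, one has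
`∑_{t=r}^{T} ∫ G_t(x)² (R_t f(x) − ∫ R_t f dμ_t)² dη_t(x) ≤ 4M²/α`,
uniformly in the time horizon `T`. -/
theorem stmt_10 {X : Type*} [MeasurableSpace X]
    (α : ℝ) (hα0 : 0 < α) (hα1 : α ≤ 1) (M : ℝ) (hM : 0 ≤ M)
    (T r : ℕ) (hT : 1 ≤ T) (hr : 1 ≤ r) (hrT : r ≤ T)
    (B : ℕ → Kernel X X) [∀ t, IsMarkovKernel (B t)]
    (hminor : ∀ t, r ≤ t → t ≤ T - 1 → ∀ x x' : X, ∀ A : Set X, MeasurableSet A →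
      ENNReal.ofReal α * (B t) x' A ≤ (B t) x A)
    (η μ : ℕ → Measure X)
    (hη : ∀ t, IsProbabilityMeasure (η t)) (hμ : ∀ t, IsProbabilityMeasure (μ t))
    (G : ℕ → X → ℝ) (hG_meas : ∀ t, Measurable (G t))
    (hG_nonneg : ∀ t x, 0 ≤ G t x) (hG_le : ∀ t x, G t x ≤ M)
    (f : X → ℝ) (hf_meas : Measurable f) (hf_le : ∀ x, |f x| ≤ 1) :
    ∑ t ∈ Finset.Icc r T,
        ∫ x, (G t x) ^ 2
            * (Rchain B r f (t - r) x - ∫ x', Rchain B r f (t - r) x' ∂(μ t)) ^ 2 ∂(η t)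
      ≤ 4 * M ^ 2 / α :=
  stmt_10_general α hα0 hα1 M T r B hminor η μ hη hμ G hG_nonneg hG_le f hf_meas hf_le
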